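/- (MacMahon–Carlitz formula) For every d ≥ 1, the following identity holds in the power series ring ℤ[q][[t]]: (∑_{r≥0} ([r+1]_q)^d t^r) · ∏_{j=0}^{d} (1 − q^j t) = ∑_{σ ∈ S_d} q^{maj(σ)} t^{desc(σ)}. -/

import Mathlib

open scoped Classical in
/-- The descent set of a permutation `σ` of `{1,…,d}` (0-indexed): the set of `i : Fin d`
such that position `i+1` (1-based) is a descent, i.e. `σ(i) > σ(i+1)`. -/
noncomputable def descentSet {d : ℕ} (σ : Equiv.Perm (Fin d)) : Finset (Fin d) :=
  Finset.univ.filter fun i => ∃ h : (i : ℕ) + 1 < d, σ ⟨(i : ℕ) + 1, h⟩ < σ i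

/-- The number of descents of a permutation. -/
noncomputable def desc {d : ℕ} (σ : Equiv.Perm (Fin d)) : ℕ := (descentSet σ).card

/-- The major index of a permutation: the sum of its (1-based) descent positions. -/
noncomputable def maj {d : ℕ} (σ : Equiv.Perm (Fin d)) : ℕ :=
  ∑ i ∈ descentSet σ, ((i : ℕ) + 1)

/-!
Expand `[r+1]_q ^ d` as the sum of `q ^ (f 1 + ⋯ + f d)` over all `f : [d] → [0, r]` and
group the tuples `f` according to the permutation `σ` that sorts them decreasingly, ties kept in
order. Then `f ∘ σ` is weakly decreasing and strictly decreasing at every descent of `σ`;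
subtracting the staircase whose value at `x` is the number of descents at positions `≥ x` turns
it into an arbitrary weakly decreasing tuple bounded by `r - desc σ`, and the staircase itself has
sum `maj σ`. Weakly decreasing `d`-tuples bounded by `m` are counted, with weight `q ^ sum`, by the
coefficient of `t ^ m` in `∏_{j=0}^d (1 - q^j t)⁻¹`.
-/

open Finset PowerSeries

variable {R : Type*}

theorem PowerSeries.mk_pow_mul_one_sub_C_mul_X [CommRing R] (a : R) :
    mk (a ^ ·) * (1 - C a * X) = 1 := by
  simpa [rescale_mk, rescale_X] using congrArg (rescale a) (mk_one_mul_one_sub_eq_one R)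

theorem PowerSeries.rescale_mk_pow [CommSemiring R] (q a : R) :
    rescale q (mk (a ^ ·)) = mk ((q * a) ^ ·) := by
  simp [rescale_mk, mul_pow]

theorem Fin.antitone_cons_iff {α : Type*} [Preorder α] {n : ℕ} {a : α} {g : Fin n → α} :
    Antitone (Fin.cons a g : Fin (n + 1) → α) ↔ (∀ i, g i ≤ a) ∧ Antitone g := by
  refine ⟨fun h => ⟨fun i => h (Fin.zero_le i.succ),
    fun i j hij => h (Fin.succ_le_succ_iff.2 hij)⟩, fun ⟨hle, hg⟩ i j hij => ?_⟩
  induction j using Fin.cases with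
  | zero => rw [Fin.le_zero_iff.1 hij]
  | succ j =>
    induction i using Fin.cases with
    | zero => exact hle j
    | succ i => exact hg (Fin.succ_le_succ_iff.1 hij)

section AntitoneBox

def antitoneBox (d m : ℕ) : Finset (Fin d → ℕ) :=
  {g ∈ Fintype.piFinset fun _ => range (m + 1) | Antitone g}

theorem mem_antitoneBox {d m : ℕ} {g : Fin d → ℕ} :
    g ∈ antitoneBox d m ↔ (∀ i, g i ≤ m) ∧ Antitone g := by
  simp [antitoneBox]

theorem cons_mem_antitoneBox_iff {d m a : ℕ} {g : Fin d → ℕ} :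
    Fin.cons a g ∈ antitoneBox (d + 1) m ↔ a ≤ m ∧ g ∈ antitoneBox d a := by
  simp only [mem_antitoneBox, Fin.forall_fin_succ, Fin.cons_zero, Fin.cons_succ,
    Fin.antitone_cons_iff]
  exact ⟨fun ⟨⟨ha, _⟩, hle, hg⟩ => ⟨ha, hle, hg⟩,
    fun ⟨ha, hle, hg⟩ => ⟨⟨ha, fun i => (hle i).trans ha⟩, hle, hg⟩⟩

variable [CommSemiring R]

def boxSum (q : R) (d m : ℕ) : R := ∑ g ∈ antitoneBox d m, q ^ ∑ i, g i

theorem boxSum_zero (q : R) (m : ℕ) : boxSum q 0 m = 1 := by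
  simp [boxSum, antitoneBox, Subsingleton.antitone]

theorem boxSum_succ (q : R) (d m : ℕ) :
    boxSum q (d + 1) m = ∑ a ∈ range (m + 1), q ^ a * boxSum q d a := by
  simp only [boxSum, mul_sum, ← pow_add]
  rw [sum_sigma']
  refine sum_nbij' (fun g => ⟨g 0, Fin.tail g⟩) (fun x => Fin.cons x.1 x.2) ?_ ?_ ?_ ?_ ?_
  · intro g hg
    rw [← Fin.cons_self_tail g, cons_mem_antitoneBox_iff] at hg
    simpa [Nat.lt_succ_iff] using hg
  · rintro ⟨a, g⟩ h
    rw [mem_sigma, mem_range, Nat.lt_succ_iff] at h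
    exact cons_mem_antitoneBox_iff.2 h
  · intro g _
    exact Fin.cons_self_tail g
  · intro x _
    simp
  · intro g _
    simp [Fin.sum_univ_succ, Fin.tail]

theorem prod_mk_pow_eq_mk_boxSum (q : R) (d : ℕ) :
    ∏ j ∈ range (d + 1), mk ((q ^ j) ^ ·) = mk (boxSum q d) := by
  induction d with
  | zero =>
    ext m
    simp [boxSum_zero]
  | succ d ih =>
    -- the factors with `j ≥ 1` are those of `d` under `t ↦ q t`; the factor `j = 0` sums over
    -- the largest entry of the tuple
    rw [prod_range_succ']
    simp only [pow_succ', ← rescale_mk_pow, ← map_prod, ih, pow_zero, one_pow]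
    ext m
    simp only [coeff_mul, coeff_rescale, coeff_mk, mul_one, boxSum_succ,
      Nat.sum_antidiagonal_eq_sum_range_succ_mk]

end AntitoneBox

section Descents

noncomputable def descentsFrom {d : ℕ} (σ : Equiv.Perm (Fin d)) (x : Fin d) : ℕ :=
  #{i ∈ descentSet σ | x ≤ i}

theorem sum_descentsFrom {d : ℕ} (σ : Equiv.Perm (Fin d)) :
    ∑ x, descentsFrom σ x = maj σ := by
  simp only [descentsFrom, card_filter]
  rw [sum_comm, maj]
  refine sum_congr rfl fun i _ => ?_
  rw [← card_filter, filter_ge_eq_Iic, Fin.card_Iic]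

variable {n : ℕ} (σ : Equiv.Perm (Fin (n + 1)))

theorem castSucc_mem_descentSet_iff (i : Fin n) :
    i.castSucc ∈ descentSet σ ↔ σ i.succ < σ i.castSucc := by
  simp [descentSet, Fin.succ]

theorem last_notMem_descentSet : Fin.last n ∉ descentSet σ := by
  simp [descentSet]

theorem descentsFrom_zero : descentsFrom σ 0 = desc σ := by
  simp [descentsFrom, desc]

theorem descentsFrom_le_desc (x : Fin (n + 1)) : descentsFrom σ x ≤ desc σ :=
  card_filter_le _ _

theorem descentsFrom_last : descentsFrom σ (Fin.last n) = 0 := by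
  simp [descentsFrom, Fin.last_le_iff, last_notMem_descentSet]

theorem descentsFrom_castSucc (i : Fin n) :
    descentsFrom σ i.castSucc =
      descentsFrom σ i.succ + if σ i.succ < σ i.castSucc then 1 else 0 := by
  have split (j : Fin (n + 1)) : (if i.castSucc ≤ j then 1 else 0) =
      (if i.succ ≤ j then 1 else 0) + if i.castSucc = j then 1 else 0 := by
    simp only [Fin.le_def, Fin.ext_iff, Fin.val_castSucc, Fin.val_succ]
    split_ifs <;> omega
  simp only [descentsFrom, card_filter, split, sum_add_distrib, sum_ite_eq,
    castSucc_mem_descentSet_iff]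

/-- `descentsFrom σ` is the least sequence with this property. -/
def IsDescentCompatible (h : Fin (n + 1) → ℕ) : Prop :=
  ∀ i : Fin n, h i.succ + (if σ i.succ < σ i.castSucc then 1 else 0) ≤ h i.castSucc

theorem isDescentCompatible_add_descentsFrom_iff {g : Fin (n + 1) → ℕ} :
    IsDescentCompatible σ (g + descentsFrom σ) ↔ Antitone g := by
  rw [Fin.antitone_iff_succ_le]
  refine forall_congr' fun i => ?_
  simp only [Pi.add_apply, descentsFrom_castSucc]
  omega

theorem descentsFrom_le_of_isDescentCompatible {h : Fin (n + 1) → ℕ}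
    (hh : IsDescentCompatible σ h) (x : Fin (n + 1)) : descentsFrom σ x ≤ h x := by
  induction x using Fin.reverseInduction with
  | last => simp [descentsFrom_last]
  | cast i ih =>
    have := hh i
    rw [descentsFrom_castSucc]
    omega

theorem antitone_sub_descentsFrom {h : Fin (n + 1) → ℕ} (hh : IsDescentCompatible σ h) :
    Antitone (h - descentsFrom σ) := by
  rw [← isDescentCompatible_add_descentsFrom_iff,
    tsub_add_cancel_of_le (descentsFrom_le_of_isDescentCompatible σ hh)]
  exact hh

end Descents

section Sorting

/-- Equal values keep their relative order, since `Tuple.sort` is stable. -/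
def antitoneSort {α : Type*} [LinearOrder α] {d : ℕ} (f : Fin d → α) : Equiv.Perm (Fin d) :=
  Tuple.sort (OrderDual.toDual ∘ f)

variable {n : ℕ} (σ : Equiv.Perm (Fin (n + 1)))

theorem antitoneSort_eq_iff {f : Fin (n + 1) → ℕ} :
    antitoneSort f = σ ↔ IsDescentCompatible σ (f ∘ σ) := by
  rw [antitoneSort, eq_comm, Tuple.eq_sort_iff', Fin.strictMono_iff_lt_succ]
  refine forall_congr' fun i => ?_
  have hne : σ i.castSucc ≠ σ i.succ := σ.injective.ne Fin.castSucc_lt_succ.ne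
  rw [← Subtype.coe_lt_coe]
  change toLex (_, _) < toLex (_, _) ↔ _
  simp only [Prod.Lex.toLex_lt_toLex, Function.comp_apply, OrderDual.toDual_lt_toDual,
    OrderDual.toDual_inj]
  have := lt_or_gt_of_ne hne
  split_ifs <;> omega

theorem sum_fiber_antitoneSort [CommSemiring R] (q : R) (r : ℕ) :
    ∑ f ∈ Fintype.piFinset (fun _ : Fin (n + 1) => range (r + 1)) with antitoneSort f = σ,
        q ^ ∑ x, f x =
      if desc σ ≤ r then q ^ maj σ * boxSum q (n + 1) (r - desc σ) else 0 := by
  have mem_fiber {f : Fin (n + 1) → ℕ} :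
      f ∈ {f ∈ Fintype.piFinset (fun _ : Fin (n + 1) => range (r + 1)) |
          antitoneSort f = σ} ↔
        (∀ x, f x ≤ r) ∧ IsDescentCompatible σ (f ∘ σ) := by
    simp [antitoneSort_eq_iff]
  split_ifs with hr
  · simp only [boxSum, mul_sum, ← pow_add]
    refine sum_nbij' (fun f => f ∘ σ - descentsFrom σ)
      (fun g => (g + descentsFrom σ) ∘ σ.symm)
      (fun f hf => ?_) (fun g hg => ?_) (fun f hf => ?_) (fun g _ => ?_) (fun f hf => ?_)
    · rw [mem_fiber] at hf
      have hanti := antitone_sub_descentsFrom σ hf.2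
      refine mem_antitoneBox.2 ⟨fun x => (hanti (Fin.zero_le x)).trans ?_, hanti⟩
      have := hf.1 (σ 0)
      simp only [Pi.sub_apply, Function.comp_apply, descentsFrom_zero]
      omega
    · rw [mem_antitoneBox] at hg
      rw [mem_fiber]
      refine ⟨fun y => ?_, ?_⟩
      · have := hg.1 (σ.symm y)
        have := descentsFrom_le_desc σ (σ.symm y)
        simp only [Function.comp_apply, Pi.add_apply]
        omega
      · rw [Function.comp_assoc, Equiv.symm_comp_self, Function.comp_id,
          isDescentCompatible_add_descentsFrom_iff]
        exact hg.2
    · rw [mem_fiber] at hf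
      ext y
      have := descentsFrom_le_of_isDescentCompatible σ hf.2 (σ.symm y)
      simp only [Function.comp_apply, Pi.add_apply, Pi.sub_apply,
        Equiv.apply_symm_apply] at this ⊢
      omega
    · ext x
      simp
    · rw [mem_fiber] at hf
      rw [← Equiv.sum_comp σ, ← sum_descentsFrom σ, ← sum_add_distrib]
      congr 1
      refine sum_congr rfl fun x _ => ?_
      have := descentsFrom_le_of_isDescentCompatible σ hf.2 x
      simp only [Function.comp_apply, Pi.sub_apply] at this ⊢
      omega
  · refine sum_eq_zero fun f hf => absurd ?_ hr
    rw [mem_fiber] at hf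
    rw [← descentsFrom_zero]
    exact (descentsFrom_le_of_isDescentCompatible σ hf.2 0).trans (hf.1 _)

end Sorting

theorem sum_pow_pow_eq_sum_piFinset [CommSemiring R] (q : R) (s : Finset ℕ) (d : ℕ) :
    (∑ i ∈ s, q ^ i) ^ d = ∑ f ∈ Fintype.piFinset (fun _ : Fin d => s), q ^ ∑ x, f x := by
  rw [← Fin.prod_const, prod_univ_sum]
  simp only [prod_pow_eq_pow_sum]

theorem mk_geom_sum_pow_eq_sum_perm_mul [CommSemiring R] (q : R) (n : ℕ) :
    mk (fun r => (∑ i ∈ range (r + 1), q ^ i) ^ (n + 1)) =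
      (∑ σ : Equiv.Perm (Fin (n + 1)), C (q ^ maj σ) * X ^ desc σ) *
        mk (boxSum q (n + 1)) := by
  ext r
  rw [coeff_mk, sum_pow_pow_eq_sum_piFinset, ← sum_fiberwise _ antitoneSort, sum_mul, map_sum]
  refine sum_congr rfl fun σ _ => ?_
  rw [sum_fiber_antitoneSort, mul_right_comm, coeff_mul_X_pow', coeff_C_mul, coeff_mk]

theorem mk_geom_sum_pow_mul_prod_one_sub [CommRing R] (q : R) (d : ℕ) :
    mk (fun r => (∑ i ∈ range (r + 1), q ^ i) ^ d) *
        ∏ j ∈ range (d + 1), (1 - C (q ^ j) * X) =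
      ∑ σ : Equiv.Perm (Fin d), C (q ^ maj σ) * X ^ desc σ := by
  cases d with
  | zero => simpa [maj, desc, Subsingleton.elim (descentSet _) ∅, Pi.one_def] using
      mk_one_mul_one_sub_eq_one R
  | succ n =>
    rw [mk_geom_sum_pow_eq_sum_perm_mul, ← prod_mk_pow_eq_mk_boxSum, mul_assoc,
      ← prod_mul_distrib, prod_eq_one fun j _ => mk_pow_mul_one_sub_C_mul_X _, mul_one]

theorem macmahon_carlitz_general (d : ℕ) :
    (PowerSeries.mk fun r : ℕ =>
        (∑ i ∈ Finset.range (r + 1), (Polynomial.X : Polynomial ℤ) ^ i) ^ d) *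
      ∏ j ∈ Finset.range (d + 1),
        (1 - (PowerSeries.C : Polynomial ℤ →+* PowerSeries (Polynomial ℤ)) (Polynomial.X ^ j) * PowerSeries.X) =
    ∑ σ : Equiv.Perm (Fin d),
      (PowerSeries.C : Polynomial ℤ →+* PowerSeries (Polynomial ℤ)) (Polynomial.X ^ maj σ) * PowerSeries.X ^ desc σ :=
  mk_geom_sum_pow_mul_prod_one_sub Polynomial.X d

/-- MacMahon–Carlitz: for every `d ≥ 1`,
`(∑_{r≥0} ([r+1]_q)^d t^r) · ∏_{j=0}^d (1−qʲt) = ∑_{σ ∈ S_d} q^{maj σ} t^{desc σ}`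
in `ℤ[q][[t]]`. -/
theorem macmahon_carlitz (d : ℕ) (hd : 1 ≤ d) :
    (PowerSeries.mk fun r : ℕ =>
        (∑ i ∈ Finset.range (r + 1), (Polynomial.X : Polynomial ℤ) ^ i) ^ d) *
      ∏ j ∈ Finset.range (d + 1),
        (1 - (PowerSeries.C : Polynomial ℤ →+* PowerSeries (Polynomial ℤ)) (Polynomial.X ^ j) * PowerSeries.X) =
    ∑ σ : Equiv.Perm (Fin d),
      (PowerSeries.C : Polynomial ℤ →+* PowerSeries (Polynomial ℤ)) (Polynomial.X ^ maj σ) * PowerSeries.X ^ desc σ :=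
  macmahon_carlitz_general d
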